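/- arXiv:0811.2304 — 2 statements merged into one kernel-verified Lean document; each statement's English description precedes it below -/
import Mathlib

section
/- Let x be a real number and let u : ℕ → ℝ satisfy u(0) = 1, u(1) = x, and u(k+2) = x·u(k+1) − u(k) for all k ≥ 0. Then for every integer m ≥ 1, x^{2m} = u(2m) + Σ_{r=0}^{m−1} ( C(2m, m−r) − C(2m, m−r−1) ) · u(2r), where C(n,k) denotes the binomial coefficient. -/
private def fc (m r : ℕ) : ℝ :=
  if r = m then 1
  else if r < m then (Nat.choose (2*m) (m-r) : ℝ) - (Nat.choose (2*m) (m-r-1) : ℝ)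
  else 0

private lemma fc_self (m : ℕ) : fc m m = 1 := by simp [fc]

private lemma fc_of_lt {m r : ℕ} (h : r < m) :
    fc m r = (Nat.choose (2*m) (m-r) : ℝ) - (Nat.choose (2*m) (m-r-1) : ℝ) := by
  simp [fc, h, Nat.ne_of_lt h]

private lemma fc_of_gt {m r : ℕ} (h : m < r) : fc m r = 0 := by
  simp [fc, Nat.ne_of_gt h, Nat.lt_asymm h]

private lemma pascal2 (n k : ℕ) :
    (n+2).choose (k+2) = n.choose k + 2 * n.choose (k+1) + n.choose (k+2) := by
  simp [Nat.choose_succ_succ]; ring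

private lemma key0 (m : ℕ) : fc (m+1) 0 = fc m 0 + fc m 1 := by
  rcases Nat.lt_or_ge m 2 with h | h
  · interval_cases m <;> simp [fc, Nat.choose] <;> norm_num
  · obtain ⟨t, rfl⟩ : ∃ t, m = t + 2 := ⟨m - 2, by omega⟩
    rw [fc_of_lt (by omega), fc_of_lt (by omega), fc_of_lt (by omega)]
    have e1 : t + 2 + 1 - 0 = t + 3 := by omega
    have e2 : t + 3 - 1 = t + 2 := by omega
    have e3 : t + 2 - 0 = t + 2 := by omega
    have e5 : t + 2 - 1 = t + 1 := by omega
    have e6 : t + 1 - 1 = t := by omega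
    have e7 : 2 * (t + 2 + 1) = 2*(t+2) + 2 := by omega
    rw [e1, e2, e3, e5, e6, e7]
    have hp1 : (2*(t+2) + 2).choose (t + 3) = (2*(t+2)).choose (t+1) + 2 * (2*(t+2)).choose (t+2) + (2*(t+2)).choose (t+3) := by
      have := pascal2 (2*(t+2)) (t+1)
      convert this using 2 <;> omega
    have hp2 : (2*(t+2) + 2).choose (t + 2) = (2*(t+2)).choose t + 2 * (2*(t+2)).choose (t+1) + (2*(t+2)).choose (t+2) := by
      have := pascal2 (2*(t+2)) t
      convert this using 2 <;> omega
    have hsymm : (2*(t+2)).choose (t+3) = (2*(t+2)).choose (t+1) := by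
      have h2 : (2*(t+2)).choose (2*(t+2) - (t+3)) = (2*(t+2)).choose (t+3) := Nat.choose_symm (by omega)
      rw [← h2]
      congr 1
      omega
    rw [hp1, hp2, hsymm]
    push_cast
    ring

private lemma keyS (m r : ℕ) : fc (m+1) (r+1) = fc m r + 2 * fc m (r+1) + fc m (r+2) := by
  rcases Nat.lt_or_ge m (r+1) with h | h
  · rcases Nat.eq_or_lt_of_le h with h' | h'
    · -- m = r
      obtain rfl : m = r := by omega
      rw [fc_self, fc_self, fc_of_gt (by omega), fc_of_gt (by omega)]
      ring
    · -- m < r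
      rw [fc_of_gt (by omega), fc_of_gt (by omega), fc_of_gt (by omega), fc_of_gt (by omega)]
      ring
  · rcases Nat.lt_or_ge m (r+3) with h2 | h2
    · rcases Nat.eq_or_lt_of_le h with h' | h'
      · -- m = r + 1
        obtain rfl : m = r + 1 := by omega
        rw [fc_of_lt (by omega), fc_of_lt (by omega), fc_self, fc_of_gt (by omega)]
        have e1 : r + 1 + 1 - (r + 1) = 1 := by omega
        have e2 : 1 - 1 = 0 := by omega
        have e3 : r + 1 - r = 1 := by omega
        rw [e1, e2, e3]
        simp [Nat.choose_one_right]
        push_cast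
        ring
      · -- m = r + 2
        obtain rfl : m = r + 2 := by omega
        rw [fc_of_lt (by omega), fc_of_lt (by omega), fc_of_lt (by omega), fc_self]
        have e1 : r + 2 + 1 - (r + 1) = 2 := by omega
        have e2 : 2 - 1 = 1 := rfl
        have e3 : r + 2 - r = 2 := by omega
        have e4 : r + 2 - (r + 1) = 1 := by omega
        have e5 : 2 * (r + 2 + 1) = 2 * (r + 2) + 2 := by omega
        rw [e1, e2, e3, e4, e5]
        have hp : (2*(r+2) + 2).choose 2 = (2*(r+2)).choose 0 + 2 * (2*(r+2)).choose 1 + (2*(r+2)).choose 2 := pascal2 (2*(r+2)) 0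
        rw [hp]
        simp [Nat.choose_one_right]
        push_cast
        ring
    · -- m ≥ r + 3, fully generic
      obtain ⟨t, rfl⟩ : ∃ t, m = r + 3 + t := ⟨m - (r+3), by omega⟩
      rw [fc_of_lt (by omega), fc_of_lt (by omega), fc_of_lt (by omega), fc_of_lt (by omega)]
      have e1 : r + 3 + t + 1 - (r + 1) = t + 3 := by omega
      have e2 : t + 3 - 1 = t + 2 := by omega
      have e3 : r + 3 + t - r = t + 3 := by omega
      have e4 : r + 3 + t - (r + 1) = t + 2 := by omega
      have e5 : t + 2 - 1 = t + 1 := by omega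
      have e6 : r + 3 + t - (r + 2) = t + 1 := by omega
      have e7 : t + 1 - 1 = t := by omega
      have e8 : 2 * (r + 3 + t + 1) = 2 * (r + 3 + t) + 2 := by omega
      rw [e1, e2, e3, e4, e5, e6, e7, e8]
      have hp1 : (2*(r+3+t) + 2).choose (t+3) = (2*(r+3+t)).choose (t+1) + 2 * (2*(r+3+t)).choose (t+2) + (2*(r+3+t)).choose (t+3) := pascal2 _ (t+1)
      have hp2 : (2*(r+3+t) + 2).choose (t+2) = (2*(r+3+t)).choose t + 2 * (2*(r+3+t)).choose (t+1) + (2*(r+3+t)).choose (t+2) := pascal2 _ t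
      rw [hp1, hp2]
      push_cast
      ring

private lemma main_expansion (x : ℝ) (u : ℕ → ℝ)
    (hu0 : u 0 = 1) (hu1 : u 1 = x)
    (hrec : ∀ k : ℕ, u (k + 2) = x * u (k + 1) - u k) :
    ∀ m : ℕ, x ^ (2 * m) = ∑ r ∈ Finset.range (m + 1), fc m r * u (2 * r) := by
  have hxu : ∀ n, x * u (n+1) = u (n+2) + u n := by
    intro n; have := hrec n; linarith
  have xsq0 : x ^ 2 * u 0 = u 2 + u 0 := by
    have h : x ^ 2 * u 0 = x * u 1 := by rw [hu0, hu1]; ring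
    rw [h]; exact hxu 0
  have xsqS : ∀ r : ℕ, x ^ 2 * u (2 * (r + 1)) = u (2 * (r + 2)) + 2 * u (2 * (r + 1)) + u (2 * r) := by
    intro r
    have h1 := hxu (2*r)
    have h2 := hxu (2*r+1)
    have h3 := hxu (2*r+2)
    have e1 : 2 * (r + 1) = 2*r + 2 := by ring
    have e2 : 2 * (r + 2) = 2*r + 4 := by ring
    rw [e1, e2]
    have h4 : x ^ 2 * u (2*r+2) = x * (u (2*r+3) + u (2*r+1)) := by
      rw [← h2]; ring
    rw [h4, mul_add, h3, h1]; ring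
  intro m
  induction m with
  | zero => simp [fc_self, hu0]
  | succ m ih =>
    have h1 : x ^ (2*(m+1)) = ∑ r ∈ Finset.range (m+1), fc m r * (x^2 * u (2*r)) := by
      have hx2 : x ^ (2*(m+1)) = x^2 * x^(2*m) := by
        rw [← pow_add]; congr 1; omega
      rw [hx2, ih, Finset.mul_sum]
      exact Finset.sum_congr rfl fun r _ => by ring
    have hpad : ∑ r ∈ Finset.range (m+2), fc m r * (x^2 * u (2*r))
        = ∑ r ∈ Finset.range (m+1), fc m r * (x^2 * u (2*r)) := by
      rw [Finset.sum_range_succ, fc_of_gt (by omega)]; ring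
    rw [h1, ← hpad]
    conv_lhs => rw [Finset.sum_range_succ']
    conv_rhs => rw [Finset.sum_range_succ']
    simp only [key0, keyS, Nat.mul_zero, xsq0, xsqS]
    simp only [mul_add, add_mul, Finset.sum_add_distrib]
    have hB : ∑ r ∈ Finset.range (m+1), fc m (r+1) * (2 * u (2*(r+1)))
        = ∑ r ∈ Finset.range (m+1), 2 * fc m (r+1) * u (2*(r+1)) :=
      Finset.sum_congr rfl fun r _ => by ring
    have hA : (∑ r ∈ Finset.range (m+1), fc m (r+1) * u (2*(r+2))) + fc m 0 * u (2*1)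
        = ∑ r ∈ Finset.range (m+1), fc m r * u (2*(r+1)) := by
      rw [Finset.sum_range_succ, fc_of_gt (by omega)]
      conv_rhs => rw [Finset.sum_range_succ']
      simp only [show ∀ i:ℕ, i+1+1 = i+2 from fun i => rfl, zero_add]
      ring
    have hC : (∑ r ∈ Finset.range (m+1), fc m (r+2) * u (2*(r+1))) + fc m 1 * u (2*0)
        = ∑ r ∈ Finset.range (m+1), fc m (r+1) * u (2*r) := by
      rw [Finset.sum_range_succ, fc_of_gt (by omega)]
      conv_rhs => rw [Finset.sum_range_succ']
      simp only [show ∀ i:ℕ, i+1+1 = i+2 from fun i => rfl, zero_add]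
      ring
    simp only [mul_add, add_mul, Nat.mul_zero, Nat.mul_one] at hA hB hC ⊢
    linarith [hA, hB, hC]

theorem hecke_recurrence_even_power_expansion (x : ℝ) (u : ℕ → ℝ)
    (hu0 : u 0 = 1) (hu1 : u 1 = x)
    (hrec : ∀ k : ℕ, u (k + 2) = x * u (k + 1) - u k)
    (m : ℕ) (hm : 1 ≤ m) :
    x ^ (2 * m) = u (2 * m) +
      ∑ r ∈ Finset.range m,
        ((Nat.choose (2 * m) (m - r) : ℝ) - (Nat.choose (2 * m) (m - r - 1) : ℝ)) * u (2 * r) := by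
  have h := main_expansion x u hu0 hu1 hrec m
  rw [h, Finset.sum_range_succ, fc_self, one_mul, add_comm]
  congr 1
  exact Finset.sum_congr rfl fun r hr => by
    rw [fc_of_lt (Finset.mem_range.mp hr)]
end

section
/- There exists a real number γ₁ (the first Stieltjes constant) equal to the limit as N → ∞ of Σ_{n=1}^N (log n)/n − (log N)²/2, such that as s → 0 (s ∈ ℂ, s ≠ 0), the function ( ζ′(1+s)/ζ(1+s) + 1/s − γ ) / s tends to −γ² − 2γ₁, where ζ is the Riemann zeta function and γ is the Euler–Mascheroni constant. -/
open Filter Topology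

/-!
Write `ζ s = (s - 1)⁻¹ + ζ₀ s = (s - 1)⁻¹ * ζ₁ s` with `ζ₀` entire and
`ζ₁ s = 1 + (s - 1) * ζ₀ s`, so `ζ'/ζ (1 + t) + 1/t = ζ₁'/ζ₁ (1 + t)` is holomorphic at `t = 0`,
with value `ζ₁'(1) = γ` and derivative `ζ₁''(1) - γ² = 2 ζ₀'(1) - γ²`. It remains to see that
`ζ₀'(1) = -γ₁`. For real `σ > 1` we have `ζ₀'(σ) = 1/(σ-1)² - ∑ log n / n^σ`, and since
`∫₁^∞ log x / x^σ dx = 1/(σ-1)²` this is minus the sum over `k` of the comparison errors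
`∫_{k+1}^{k+2} (f(k+2) - f(x)) dx` with `f(x) = log x / x^σ`. By the mean value theorem these are
`O(k^{-3/2})` uniformly in `σ ∈ [1, 2]`, so their sum is continuous at `σ = 1`, where its partial
sums are exactly `∑_{n ≤ N+1} log n / n - (log (N+1))²/2`.
-/

section

open Real Set

lemma sum_range_integral_sub_eq {f : ℝ → ℝ}
    (hf : ∀ k : ℕ, IntervalIntegrable f MeasureTheory.volume (k + 1) (k + 2)) (N : ℕ) :
    ∑ k ∈ Finset.range N, ∫ x in (k + 1 : ℝ)..(k + 2), (f (k + 2) - f x) =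
      ∑ k ∈ Finset.range N, f (k + 2) - ∫ x in (1 : ℝ)..(N + 1), f x := by
  have hadj := intervalIntegral.sum_integral_adjacent_intervals (a := fun k : ℕ => (k : ℝ) + 1)
    (μ := MeasureTheory.volume) (n := N) fun k _ => by
      simpa [add_assoc, one_add_one_eq_two] using hf k
  simp only [Nat.cast_zero, zero_add, Nat.cast_add, Nat.cast_one, add_assoc,
    one_add_one_eq_two] at hadj
  rw [← hadj, ← Finset.sum_sub_distrib]
  refine Finset.sum_congr rfl fun k _ => ?_
  rw [intervalIntegral.integral_sub intervalIntegrable_const (hf k),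
    intervalIntegral.integral_const]
  norm_num

namespace Stieltjes

lemma continuousOn_log_div_rpow (s : ℝ) : ContinuousOn (fun x => log x / x ^ s) (Ioi 0) :=
  fun x (hx : 0 < x) => ((continuousAt_log hx.ne').div (continuousAt_id.rpow_const (.inl hx.ne'))
    (rpow_pos_of_pos hx s).ne').continuousWithinAt

lemma intervalIntegrable_log_div_rpow (s : ℝ) {a b : ℝ} (ha : 0 < a) (hb : 0 < b) :
    IntervalIntegrable (fun x => log x / x ^ s) MeasureTheory.volume a b :=
  ((continuousOn_log_div_rpow s).mono fun _ hx => lt_of_lt_of_le (lt_min ha hb) hx.1)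
    |>.intervalIntegrable

lemma hasDerivAt_log_div_rpow (s : ℝ) {t : ℝ} (ht : 0 < t) :
    HasDerivAt (fun x => log x / x ^ s) ((1 - s * log t) / t ^ (s + 1)) t := by
  refine ((hasDerivAt_log ht.ne').div (hasDerivAt_rpow_const (p := s) (.inl ht.ne'))
    (by positivity)).congr_deriv ?_
  rw [rpow_add ht, rpow_one, rpow_sub_one ht.ne']
  field_simp

lemma abs_deriv_log_div_rpow_le {s t : ℝ} (hs : s ∈ Icc 1 2) (ht : 1 ≤ t) :
    |(1 - s * log t) / t ^ (s + 1)| ≤ 5 / t ^ (3 / 2 : ℝ) := by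
  have ht0 : 0 < t := by linarith
  have hlog : 0 ≤ log t := log_nonneg ht
  have hsqrt : 1 ≤ t ^ (1 / 2 : ℝ) := one_le_rpow ht (by norm_num)
  have hlog_le : log t ≤ 2 * t ^ (1 / 2 : ℝ) := by
    have := log_le_rpow_div ht0.le (ε := 1 / 2) (by norm_num)
    linarith
  have hnum : |1 - s * log t| ≤ 5 * t ^ (1 / 2 : ℝ) := by
    rw [abs_le]
    constructor <;> nlinarith [hs.1, hs.2]
  have hden : t ^ (1 / 2 : ℝ) * t ^ (3 / 2 : ℝ) ≤ t ^ (s + 1) := by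
    rw [← rpow_add ht0]
    exact rpow_le_rpow_of_exponent_le ht (by norm_num; linarith [hs.1])
  rw [abs_div, abs_of_pos (a := t ^ (s + 1)) (by positivity),
    div_le_div_iff₀ (by positivity) (by positivity)]
  nlinarith [rpow_pos_of_pos ht0 (3 / 2 : ℝ)]

lemma abs_log_div_rpow_sub_le {s : ℝ} (hs : s ∈ Icc 1 2) (k : ℕ) {x : ℝ}
    (hx : x ∈ Icc ((k : ℝ) + 1) (k + 2)) :
    |log (k + 2) / ((k : ℝ) + 2) ^ s - log x / x ^ s| ≤ 5 / ((k : ℝ) + 1) ^ (3 / 2 : ℝ) := by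
  have hk : (1 : ℝ) ≤ k + 1 := by simp
  have hderiv : ∀ t ∈ Icc ((k : ℝ) + 1) (k + 2),
      ‖(1 - s * log t) / t ^ (s + 1)‖ ≤ 5 / ((k : ℝ) + 1) ^ (3 / 2 : ℝ) := fun t ht =>
    (abs_deriv_log_div_rpow_le hs (hk.trans ht.1)).trans (by gcongr; exact ht.1)
  have hmvt := (convex_Icc ((k : ℝ) + 1) (k + 2)).norm_image_sub_le_of_norm_hasDerivWithin_le
    (fun t ht => (hasDerivAt_log_div_rpow s (by linarith [ht.1])).hasDerivWithinAt) hderiv hx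
    (right_mem_Icc.2 (by linarith))
  have hdist : ‖(k : ℝ) + 2 - x‖ ≤ 1 := by
    rw [Real.norm_eq_abs, abs_le]
    constructor <;> linarith [hx.1, hx.2]
  calc _ ≤ 5 / ((k : ℝ) + 1) ^ (3 / 2 : ℝ) * ‖(k : ℝ) + 2 - x‖ := hmvt
    _ ≤ 5 / ((k : ℝ) + 1) ^ (3 / 2 : ℝ) := mul_le_of_le_one_right (by positivity) hdist

noncomputable def term (s : ℝ) (k : ℕ) : ℝ :=
  ∫ x in (k + 1 : ℝ)..(k + 2), (log (k + 2) / ((k : ℝ) + 2) ^ s - log x / x ^ s)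

noncomputable def termTSum (s : ℝ) : ℝ := ∑' k, term s k

lemma abs_term_le {s : ℝ} (hs : s ∈ Icc 1 2) (k : ℕ) :
    |term s k| ≤ 5 / ((k : ℝ) + 1) ^ (3 / 2 : ℝ) := by
  have := intervalIntegral.norm_integral_le_of_norm_le_const (a := (k : ℝ) + 1) (b := k + 2)
    fun x hx => (Real.norm_eq_abs _).trans_le <| abs_log_div_rpow_sub_le hs k
      (Ioc_subset_Icc_self (by rwa [uIoc_of_le (by linarith)] at hx))
  rwa [Real.norm_eq_abs, show (k : ℝ) + 2 - (k + 1) = 1 by ring, abs_one, mul_one] at this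

lemma summable_term_bound : Summable fun k : ℕ => 5 / ((k : ℝ) + 1) ^ (3 / 2 : ℝ) := by
  have := (summable_nat_add_iff 1).2 (summable_one_div_nat_rpow.2 (by norm_num : (1 : ℝ) < 3 / 2))
  simpa [div_eq_mul_inv] using this.mul_left 5

lemma summable_term {s : ℝ} (hs : s ∈ Icc 1 2) : Summable (term s) :=
  summable_term_bound.of_norm_bounded fun k => abs_term_le hs k

lemma continuousOn_term (k : ℕ) : ContinuousOn (term · k) (Icc 1 2) := by
  intro s₀ _
  refine intervalIntegral.continuousWithinAt_of_dominated_interval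
    (bound := fun _ => 5 / ((k : ℝ) + 1) ^ (3 / 2 : ℝ)) ?_ ?_ intervalIntegrable_const ?_
  · exact Eventually.of_forall fun s => (by fun_prop : Measurable _).aestronglyMeasurable
  · filter_upwards [self_mem_nhdsWithin] with s hs
    refine MeasureTheory.ae_of_all _ fun x hx => abs_log_div_rpow_sub_le hs k ?_
    exact Ioc_subset_Icc_self (by rwa [uIoc_of_le (by linarith)] at hx)
  · refine MeasureTheory.ae_of_all _ fun x hx => ?_
    have hx0 : 0 < x := by
      rw [uIoc_of_le (by linarith)] at hx
      linarith [hx.1]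
    exact (ContinuousAt.sub (by fun_prop (disch := positivity))
      (by fun_prop (disch := positivity))).continuousWithinAt

lemma continuousOn_termTSum : ContinuousOn termTSum (Icc 1 2) :=
  continuousOn_tsum continuousOn_term summable_term_bound fun k _ hs => abs_term_le hs k

lemma sum_range_term (s : ℝ) (N : ℕ) :
    ∑ k ∈ Finset.range N, term s k =
      ∑ k ∈ Finset.range N, log ((k : ℝ) + 2) / ((k : ℝ) + 2) ^ s -
        ∫ x in (1 : ℝ)..(N + 1), log x / x ^ s :=
  sum_range_integral_sub_eq
    (fun _ => intervalIntegrable_log_div_rpow s (by positivity) (by positivity)) N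

lemma integral_log_div_rpow_one {Y : ℝ} (hY : 0 < Y) :
    ∫ x in (1 : ℝ)..Y, log x / x ^ (1 : ℝ) = log Y ^ 2 / 2 := by
  rw [intervalIntegral.integral_eq_sub_of_hasDerivAt (f := fun x => log x ^ 2 / 2)
    (fun x hx => ?_) (intervalIntegrable_log_div_rpow 1 one_pos hY)]
  · simp
  · have hx0 : x ≠ 0 := (lt_of_lt_of_le (lt_min one_pos hY) hx.1).ne'
    refine (((hasDerivAt_log hx0).pow 2).div_const 2).congr_deriv ?_
    rw [rpow_one]
    field_simp
    norm_num

lemma tendsto_integral_log_div_rpow {s : ℝ} (hs : 1 < s) :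
    Tendsto (fun Y => ∫ x in (1 : ℝ)..Y, log x / x ^ s) atTop (𝓝 (1 / (s - 1) ^ 2)) := by
  have ha : 0 < s - 1 := by linarith
  set G : ℝ → ℝ := fun x => -(x ^ (1 - s) * (log x / (s - 1) + 1 / (s - 1) ^ 2)) with hG
  have hderiv : ∀ x, 0 < x → HasDerivAt G (log x / x ^ s) x := by
    intro x hx
    refine (((hasDerivAt_rpow_const (p := 1 - s) (.inl hx.ne')).mul
      (((hasDerivAt_log hx.ne').div_const (s - 1)).add_const _)).neg).congr_deriv ?_
    rw [show 1 - s - 1 = -s by ring, rpow_neg hx.le, rpow_sub hx, rpow_one]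
    field_simp
    ring
  have hG_lim : Tendsto G atTop (𝓝 0) := by
    have h1 : Tendsto (fun x : ℝ => x ^ (1 - s)) atTop (𝓝 0) := by
      simpa [neg_sub] using tendsto_rpow_neg_atTop ha
    have h2 : Tendsto (fun x : ℝ => x ^ (1 - s) * log x) atTop (𝓝 0) := by
      refine ((isLittleO_log_rpow_atTop ha).tendsto_div_nhds_zero).congr' ?_
      filter_upwards [eventually_gt_atTop 0] with x hx
      rw [show 1 - s = -(s - 1) by ring, rpow_neg hx.le, div_eq_inv_mul]
    have := ((h2.div_const (s - 1)).add (h1.mul_const (1 / (s - 1) ^ 2))).neg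
    rw [zero_div, zero_mul, add_zero, neg_zero] at this
    exact this.congr fun x => by simp only [hG]; ring
  have hG_one : G 1 = -(1 / (s - 1) ^ 2) := by simp [hG]
  have := hG_lim.sub_const (G 1)
  rw [hG_one, zero_sub, neg_neg] at this
  refine this.congr' ?_
  filter_upwards [eventually_gt_atTop 0] with Y hY
  rw [← hG_one]
  refine (intervalIntegral.integral_eq_sub_of_hasDerivAt (fun x hx => hderiv x ?_)
    (intervalIntegrable_log_div_rpow s one_pos hY)).symm
  exact lt_of_lt_of_le (lt_min one_pos hY) hx.1

lemma hasSum_log_div_rpow {s : ℝ} (hs : s ∈ Ioc 1 2) :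
    HasSum (fun k : ℕ => log ((k : ℝ) + 2) / ((k : ℝ) + 2) ^ s)
      (termTSum s + 1 / (s - 1) ^ 2) := by
  rw [hasSum_iff_tendsto_nat_of_nonneg fun k =>
    div_nonneg (log_nonneg (by linarith [k.cast_nonneg (α := ℝ)])) (by positivity)]
  have hint := (tendsto_integral_log_div_rpow hs.1).comp
    (tendsto_atTop_add_const_right _ 1 tendsto_natCast_atTop_atTop)
  refine ((summable_term (Ioc_subset_Icc_self hs)).hasSum.tendsto_sum_nat.add hint).congr
    fun N => ?_
  simp only [Function.comp_apply, sum_range_term]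
  ring

lemma tendsto_sum_log_div_sub_log_sq :
    Tendsto (fun N : ℕ => ∑ n ∈ Finset.Icc 1 N, log n / n - log N ^ 2 / 2) atTop
      (𝓝 (termTSum 1)) := by
  rw [← tendsto_add_atTop_iff_nat 1]
  refine (summable_term (left_mem_Icc.2 one_le_two)).hasSum.tendsto_sum_nat.congr fun N => ?_
  rw [sum_range_term, integral_log_div_rpow_one (by positivity),
    ← Finset.Ico_add_one_right_eq_Icc, Finset.sum_Ico_eq_sum_range, Nat.add_sub_cancel,
    Finset.sum_range_succ']
  push_cast
  simp only [rpow_one, add_zero, log_one, zero_div]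
  ring_nf

end Stieltjes

open Stieltjes

lemma hasSum_LSeries_term_logMul_one {σ : ℝ} (hσ : σ ∈ Ioc 1 2) :
    HasSum (LSeries.term (LSeries.logMul 1) σ) (termTSum σ + 1 / (σ - 1) ^ 2 : ℝ) := by
  rw [← hasSum_nat_add_iff' 2]
  simp only [Finset.sum_range_succ, Finset.sum_range_zero, LSeries.term_zero, zero_add]
  rw [LSeries.term_of_ne_zero one_ne_zero]
  simp only [LSeries.logMul, Nat.cast_one, Complex.log_one, zero_mul, zero_div, sub_zero]
  refine (Complex.hasSum_ofReal.2 (hasSum_log_div_rpow hσ)).congr_fun fun k => ?_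
  rw [LSeries.term_of_ne_zero (by omega), LSeries.logMul, Pi.one_apply, mul_one,
    Complex.ofReal_div, Complex.ofReal_cpow (by positivity), Complex.ofReal_log (by positivity)]
  push_cast
  ring_nf

lemma deriv_riemannZeta_ofReal {σ : ℝ} (hσ : σ ∈ Ioc 1 2) :
    deriv riemannZeta σ = -(termTSum σ + 1 / (σ - 1) ^ 2 : ℝ) := by
  have hre : 1 < (σ : ℂ).re := by simpa using hσ.1
  have hL : riemannZeta =ᶠ[𝓝 (σ : ℂ)] LSeries 1 := by
    filter_upwards [(isOpen_lt continuous_const Complex.continuous_re).mem_nhds hre] with s hs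
    exact (LSeries_one_eq_riemannZeta hs).symm
  rw [hL.deriv_eq, LSeries_deriv (by rw [LSeries.abscissaOfAbsConv_one]; exact_mod_cast hre),
    LSeries, (hasSum_LSeries_term_logMul_one hσ).tsum_eq]

lemma deriv_riemannZeta₀_ofReal {σ : ℝ} (hσ : σ ∈ Ioc 1 2) :
    deriv riemannZeta₀ σ = -termTSum σ := by
  have h := deriv_riemannZeta_eq_neg_inv_sub_sq_add (s := σ) (by exact_mod_cast hσ.1.ne')
  rw [deriv_riemannZeta_ofReal hσ] at h
  push_cast at h
  rw [one_div, ← inv_pow] at h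
  linear_combination -h

lemma deriv_riemannZeta₀_one : deriv riemannZeta₀ 1 = -termTSum 1 := by
  have hcast : Tendsto (fun σ : ℝ => (σ : ℂ)) (𝓝[>] 1) (𝓝 1) :=
    (Complex.continuous_ofReal.tendsto' 1 1 Complex.ofReal_one).mono_left nhdsWithin_le_nhds
  have hZ := (differentiable_riemannZeta₀.deriv.continuous.tendsto 1).comp hcast
  have hT : Tendsto (fun σ : ℝ => ((-termTSum σ : ℝ) : ℂ)) (𝓝[>] 1) (𝓝 (-termTSum 1 : ℝ)) :=
    (Complex.continuous_ofReal.tendsto _).comp <|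
      ((continuousOn_termTSum 1 (left_mem_Icc.2 one_le_two)).neg).mono_left
        (nhdsWithin_le_of_mem (Icc_mem_nhdsGT one_lt_two))
  refine (tendsto_nhds_unique hZ (hT.congr' ?_)).trans (Complex.ofReal_neg _)
  filter_upwards [Ioc_mem_nhdsGT one_lt_two] with σ hσ
  simp [deriv_riemannZeta₀_ofReal hσ]

lemma deriv_riemannZeta₁ :
    deriv riemannZeta₁ = fun s => riemannZeta₀ s + (s - 1) * deriv riemannZeta₀ s := by
  ext s
  have : HasDerivAt riemannZeta₁ _ s :=
    (((hasDerivAt_id s).sub_const 1).mul (differentiable_riemannZeta₀ s).hasDerivAt).const_add 1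
  rw [this.deriv, id, one_mul]

lemma hasDerivAt_logDeriv_riemannZeta₁_one :
    HasDerivAt (logDeriv riemannZeta₁) (2 * deriv riemannZeta₀ 1 - eulerMascheroniConstant ^ 2)
      1 := by
  have h1 : HasDerivAt riemannZeta₁ eulerMascheroniConstant 1 := by
    rw [← deriv_riemannZeta₁_one]
    exact (differentiable_riemannZeta₁ 1).hasDerivAt
  have h2 : HasDerivAt (deriv riemannZeta₁) (2 * deriv riemannZeta₀ 1) 1 := by
    rw [deriv_riemannZeta₁]
    refine ((differentiable_riemannZeta₀ 1).hasDerivAt.add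
      (((hasDerivAt_id (1 : ℂ)).sub_const 1).mul
        (differentiable_riemannZeta₀.deriv 1).hasDerivAt)).congr_deriv ?_
    simp only [id, sub_self, zero_mul, add_zero, one_mul]
    ring
  refine (h2.div h1 (by simp)).congr_deriv ?_
  simp only [riemannZeta₁_one, deriv_riemannZeta₁_one]
  ring

lemma logDeriv_riemannZeta_one_add_add_inv :
    ∀ᶠ t in 𝓝[≠] (0 : ℂ), deriv riemannZeta (1 + t) / riemannZeta (1 + t) + 1 / t =
      logDeriv riemannZeta₁ (1 + t) := by
  have hshift : Tendsto (fun t : ℂ => 1 + t) (𝓝[≠] 0) (𝓝[≠] 1) := by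
    have := (map_add_left_nhdsNE (c := (1 : ℂ)) (a := 0)).le
    rwa [add_zero] at this
  filter_upwards [hshift.eventually log_deriv_riemannZeta_eq_neg_inv_sub_add] with t ht
  rw [ht, logDeriv_apply]
  simp

end

theorem zeta_logDeriv_second_order_expansion :
    ∃ γ₁ : ℝ,
      Tendsto (fun N : ℕ => (∑ n ∈ Finset.Icc 1 N, Real.log n / n) - (Real.log N) ^ 2 / 2)
        atTop (𝓝 γ₁) ∧
      Tendsto
        (fun s : ℂ =>
          (deriv riemannZeta (1 + s) / riemannZeta (1 + s) + 1 / s -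
            (Real.eulerMascheroniConstant : ℂ)) / s)
        (𝓝[≠] (0 : ℂ))
        (𝓝 (-(Real.eulerMascheroniConstant : ℂ) ^ 2 - 2 * (γ₁ : ℂ))) := by
  refine ⟨Stieltjes.termTSum 1, Stieltjes.tendsto_sum_log_div_sub_log_sq, ?_⟩
  have hslope := hasDerivAt_iff_tendsto_slope_zero.1 hasDerivAt_logDeriv_riemannZeta₁_one
  rw [deriv_riemannZeta₀_one] at hslope
  convert hslope.congr' ?_ using 2
  · ring
  filter_upwards [logDeriv_riemannZeta_one_add_add_inv] with t ht
  rw [ht, logDeriv_apply riemannZeta₁ 1, riemannZeta₁_one, deriv_riemannZeta₁_one, div_one,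
    smul_eq_mul, div_eq_inv_mul]
end
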